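/- arXiv:2411.06472 — 4 statements merged into one kernel-verified Lean document; each statement's English description precedes it below -/
import Mathlib

section
/- For the matrix M = S^{t+1} + b S^{t+2} + δ J with δ ≠ 0, every eigenvector v of M for the eigenvalue 0 satisfies Σ_{j=1}^n v_j = 0. -/
open Matrix Finset

/-- The n×n shift matrix with ones on the superdiagonal. -/
def shiftMat (n : ℕ) : Matrix (Fin n) (Fin n) ℂ :=
  Matrix.of fun j k => if (k : ℕ) = (j : ℕ) + 1 then 1 else 0

/-- The matrix `M = S^{t+1} + b S^{t+2} + δ J` of the dynamical system. -/
noncomputable def modelMat (n t : ℕ) (b δ : ℂ) : Matrix (Fin n) (Fin n) ℂ :=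
  (shiftMat n) ^ (t + 1) + b • (shiftMat n) ^ (t + 2) + δ • Matrix.of fun _ _ => (1 : ℂ)

/-
The last row of the shift matrix `S` vanishes, hence so does the last row of every product
`S * A`, in particular of `S^{t+1}` and `S^{t+2}`. The last row of `M` is therefore `δ (1, …, 1)`,
and the last coordinate of `M v = 0` reads `δ Σ_j v_j = 0`.
-/

theorem shiftMat_last_apply (m : ℕ) (k : Fin (m + 1)) : shiftMat (m + 1) (Fin.last m) k = 0 := by
  simp only [shiftMat, of_apply, Fin.val_last, ite_eq_right_iff]
  omega

theorem shiftMat_mul_last_apply (m : ℕ) (A : Matrix (Fin (m + 1)) (Fin (m + 1)) ℂ)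
    (k : Fin (m + 1)) : (shiftMat (m + 1) * A) (Fin.last m) k = 0 := by
  simp [mul_apply, shiftMat_last_apply]

theorem modelMat_last_apply (m t : ℕ) (b δ : ℂ) (k : Fin (m + 1)) :
    modelMat (m + 1) t b δ (Fin.last m) k = δ := by
  simp [modelMat, pow_succ' _ t, pow_succ' _ (t + 1), shiftMat_mul_last_apply]

theorem modelMat_ker_sum_eq_zero_general (n t : ℕ)
    (b δ : ℂ) (hδ : δ ≠ 0) (v : Fin n → ℂ)
    (h : (modelMat n t b δ).mulVec v = 0) :
    ∑ j : Fin n, v j = 0 := by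
  obtain _ | m := n
  · simp
  have hlast : δ * ∑ j, v j = 0 := by
    simpa [mulVec, dotProduct, modelMat_last_apply, ← mul_sum] using congrFun h (Fin.last m)
  exact (mul_eq_zero.mp hlast).resolve_left hδ

/-- Every eigenvector of `M = S^{t+1} + b S^{t+2} + δ J` (with `δ ≠ 0`) for the
eigenvalue `0` satisfies `Σ_j v_j = 0`. -/
theorem modelMat_ker_sum_eq_zero (n t : ℕ) (hn : 2 ≤ n) (ht1 : 1 ≤ t) (ht2 : t ≤ n - 2)
    (b δ : ℂ) (hδ : δ ≠ 0) (v : Fin n → ℂ) (hv : v ≠ 0)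
    (h : (modelMat n t b δ).mulVec v = 0) :
    ∑ j : Fin n, v j = 0 :=
  modelMat_ker_sum_eq_zero_general n t b δ hδ v h
end

section
/- The kernel of M = S^{t+1} + b S^{t+2} + δ J with δ ≠ 0 equals the set of vectors v with v_j = 0 for all j > t+1 and Σ_{j=1}^{t+1} v_j = 0; in particular, the geometric multiplicity of the eigenvalue 0 of M equals t. -/
/-!
Write `u : ℕ → ℂ` for `v` extended by zero, so that `(M v)_j = u_{j+t+1} + b u_{j+t+2} + δ ∑ v`.
The last row gives `δ ∑ v = 0`; the other rows then say `u_k + b u_{k+1} = 0` for `k ≥ t+1`, and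
since `u` vanishes from `n` on, descending induction gives `u_k = 0` for all `k ≥ t+1`. The kernel
is therefore the image, under extension by zero, of the sum-zero hyperplane of `ℂ^{t+1}`, which
has dimension `t`.
-/

open Matrix Finset

open Function

section ExtendVal

variable {R : Type*} [Zero R] {n : ℕ}

theorem extend_val_of_le (v : Fin n → R) {k : ℕ} (hk : n ≤ k) : extend Fin.val v 0 k = 0 :=
  extend_apply' _ _ _ fun ⟨j, hj⟩ => by omega

theorem extend_val_of_lt (v : Fin n → R) {k : ℕ} (hk : k < n) :
    extend Fin.val v 0 k = v ⟨k, hk⟩ :=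
  Fin.val_injective.extend_apply v 0 ⟨k, hk⟩

theorem forall_extend_val_eq_zero_iff {v : Fin n → R} {m : ℕ} :
    (∀ k, m ≤ k → extend Fin.val v 0 k = 0) ↔ ∀ j : Fin n, m ≤ (j : ℕ) → v j = 0 := by
  refine ⟨fun h j hj => ?_, fun h k hk => ?_⟩
  · simpa [Fin.val_injective.extend_apply] using h j hj
  · by_cases hkn : k < n
    · rw [extend_val_of_lt v hkn, h _ hk]
    · exact extend_val_of_le v (not_lt.mp hkn)

end ExtendVal

theorem eq_zero_of_add_mul_succ_eq_zero {R : Type*} [Semiring R] {u : ℕ → R} {b : R} {m n : ℕ}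
    (hn : ∀ k, n ≤ k → u k = 0) (hu : ∀ k, m ≤ k → u k + b * u (k + 1) = 0) :
    ∀ k, m ≤ k → u k = 0 := by
  suffices ∀ d k, n ≤ k + d → m ≤ k → u k = 0 from fun k hk => this n k (by omega) hk
  intro d
  induction d with
  | zero => exact fun k hk _ => hn k (by omega)
  | succ d ih =>
    intro k hk hmk
    simpa [ih (k + 1) (by omega) (by omega)] using hu k hmk

theorem shiftMat_mulVec_apply {n : ℕ} (v : Fin n → ℂ) (j : Fin n) :
    (shiftMat n *ᵥ v) j = extend Fin.val v 0 (j + 1) := by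
  have hv : ∀ k : Fin n, v k = extend Fin.val v 0 k := fun k =>
    (Fin.val_injective.extend_apply v 0 k).symm
  simp only [mulVec, dotProduct, shiftMat, of_apply, ite_mul, one_mul, zero_mul, hv]
  rw [Fin.sum_univ_eq_sum_range (fun k => if k = j + 1 then extend Fin.val v 0 k else 0),
    sum_ite_eq', ite_eq_left_iff, mem_range, not_lt]
  exact fun h => (extend_val_of_le v h).symm

theorem extend_val_shiftMat_pow_mulVec {n : ℕ} (v : Fin n → ℂ) (p k : ℕ) :
    extend Fin.val ((shiftMat n ^ p) *ᵥ v) 0 k = extend Fin.val v 0 (k + p) := by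
  induction p generalizing v k with
  | zero => simp
  | succ p ih =>
    rw [pow_succ, ← mulVec_mulVec, ih, ← add_assoc]
    by_cases hk : k + p < n
    · rw [extend_val_of_lt _ hk, shiftMat_mulVec_apply]
    · rw [extend_val_of_le _ (not_lt.mp hk), extend_val_of_le _ (by omega)]

theorem modelMat_mulVec_apply {n : ℕ} (t : ℕ) (b δ : ℂ) (v : Fin n → ℂ) (j : Fin n) :
    (modelMat n t b δ *ᵥ v) j = extend Fin.val v 0 (j + (t + 1))
      + b * extend Fin.val v 0 (j + (t + 2)) + δ * ∑ k, v k := by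
  have hS : ∀ p, ((shiftMat n ^ p) *ᵥ v) j = extend Fin.val v 0 (j + p) := fun p => by
    rw [← extend_val_shiftMat_pow_mulVec, Fin.val_injective.extend_apply]
  simp only [modelMat, add_mulVec, smul_mulVec, Pi.add_apply, Pi.smul_apply, smul_eq_mul, hS]
  simp [mulVec, dotProduct]

theorem modelMat_mulVec_eq_zero_iff {n t : ℕ} {b δ : ℂ} (hδ : δ ≠ 0) (v : Fin n → ℂ) :
    modelMat n t b δ *ᵥ v = 0 ↔
      (∀ j : Fin n, t + 1 ≤ (j : ℕ) → v j = 0) ∧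
        ∑ j ∈ univ.filter (fun j : Fin n => (j : ℕ) < t + 1), v j = 0 := by
  have hrow := modelMat_mulVec_apply t b δ v
  suffices modelMat n t b δ *ᵥ v = 0 ↔ (∀ k, t + 1 ≤ k → extend Fin.val v 0 k = 0) ∧ ∑ j, v j = 0 by
    rw [this, forall_extend_val_eq_zero_iff, and_congr_right_iff]
    intro hv
    rw [sum_filter_of_ne fun j _ hj => by_contra fun hjt => hj (hv j (by omega))]
  constructor
  · intro hMv
    have hsum : ∑ j, v j = 0 := by
      cases n with
      | zero => simp
      | succ n =>
        have := congrFun hMv (Fin.last n)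
        rw [hrow, extend_val_of_le v (by simp), extend_val_of_le v (by simp)] at this
        simpa [hδ] using this
    refine ⟨eq_zero_of_add_mul_succ_eq_zero (b := b) (n := n) (fun k => extend_val_of_le v)
      (fun k hk => ?_), hsum⟩
    by_cases hkn : k < n
    · have := congrFun hMv ⟨k - (t + 1), by omega⟩
      rwa [hrow, hsum, mul_zero, add_zero, show k - (t + 1) + (t + 2) = k + 1 by omega,
        Nat.sub_add_cancel hk] at this
    · rw [extend_val_of_le v (not_lt.mp hkn), extend_val_of_le v (by omega), mul_zero, add_zero]
  · rintro ⟨hu, hsum⟩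
    ext j
    rw [hrow, hu _ (by omega), hu _ (by omega), hsum]
    simp

theorem sum_filter_val_lt_eq_sum_castLE {M : Type*} [AddCommMonoid M] {m n : ℕ} (hm : m ≤ n)
    (f : Fin n → M) :
    ∑ j ∈ univ.filter (fun j : Fin n => (j : ℕ) < m), f j = ∑ i : Fin m, f (Fin.castLE hm i) := by
  have hfilter : univ.filter (fun j : Fin n => (j : ℕ) < m) = univ.map (Fin.castLEEmb hm) := by
    ext j
    simp only [mem_filter, mem_univ, true_and, mem_map, Fin.castLEEmb_apply]
    exact ⟨fun hj => ⟨⟨j, hj⟩, rfl⟩, by rintro ⟨i, rfl⟩; exact i.2⟩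
  rw [hfilter, sum_map]
  rfl

section SumZeroPrefix

variable (K : Type*) [Field K] {m n : ℕ}

noncomputable def sumCoords (ι : Type*) [Fintype ι] : (ι → K) →ₗ[K] K :=
  ∑ i, LinearMap.proj i

theorem sumCoords_apply {ι : Type*} [Fintype ι] (w : ι → K) : sumCoords K ι w = ∑ i, w i :=
  LinearMap.sum_apply _ _ _

theorem finrank_ker_sumCoords : Module.finrank K (LinearMap.ker (sumCoords K (Fin (m + 1)))) = m := by
  have hrange : LinearMap.range (sumCoords K (Fin (m + 1))) = ⊤ :=
    LinearMap.range_eq_top.mpr fun c => ⟨Pi.single 0 c, by simp [sumCoords_apply]⟩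
  have := LinearMap.finrank_range_add_finrank_ker (sumCoords K (Fin (m + 1)))
  rw [hrange, finrank_top, Module.finrank_self, Module.finrank_fin_fun] at this
  omega

noncomputable def sumZeroPrefix (hm : m ≤ n) : Submodule K (Fin n → K) :=
  (LinearMap.ker (sumCoords K (Fin m))).map (ExtendByZero.linearMap K (Fin.castLE hm))

variable {K}

theorem mem_sumZeroPrefix_iff (hm : m ≤ n) (v : Fin n → K) :
    v ∈ sumZeroPrefix K hm ↔
      (∀ j : Fin n, m ≤ (j : ℕ) → v j = 0) ∧
        ∑ j ∈ univ.filter (fun j : Fin n => (j : ℕ) < m), v j = 0 := by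
  simp only [sumZeroPrefix, Submodule.mem_map, LinearMap.mem_ker, sumCoords_apply,
    sum_filter_val_lt_eq_sum_castLE hm]
  constructor
  · rintro ⟨w, hw, rfl⟩
    refine ⟨fun j hj => extend_apply' _ _ _ ?_, by simpa [(Fin.castLE_injective hm).extend_apply]⟩
    rintro ⟨i, rfl⟩
    exact absurd i.2 (not_lt.mpr hj)
  · rintro ⟨hv, hsum⟩
    refine ⟨v ∘ Fin.castLE hm, hsum, funext fun j => ?_⟩
    by_cases hj : (j : ℕ) < m
    · exact (Fin.castLE_injective hm).extend_apply _ _ ⟨j, hj⟩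
    · rw [ExtendByZero.linearMap_apply, extend_apply' _ _ _ ?_, hv j (not_lt.mp hj), Pi.zero_apply]
      rintro ⟨i, rfl⟩
      exact hj i.2

theorem finrank_sumZeroPrefix (hm : m + 1 ≤ n) : Module.finrank K (sumZeroPrefix K hm) = m := by
  rw [sumZeroPrefix, ← LinearEquiv.finrank_eq (Submodule.equivMapOfInjective _
    (extend_injective (Fin.castLE_injective hm) 0) _), finrank_ker_sumCoords]

end SumZeroPrefix

theorem modelMat_ker_description_general (n t : ℕ) (hn : 2 ≤ n) (ht2 : t ≤ n - 2)
    (b δ : ℂ) (hδ : δ ≠ 0) :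
    (∀ v : Fin n → ℂ, (modelMat n t b δ).mulVec v = 0 ↔
      ((∀ j : Fin n, t + 1 ≤ (j : ℕ) → v j = 0) ∧
        ∑ j ∈ Finset.univ.filter (fun j : Fin n => (j : ℕ) < t + 1), v j = 0)) ∧
    Module.finrank ℂ (LinearMap.ker (modelMat n t b δ).mulVecLin) = t := by
  have htn : t + 1 ≤ n := by omega
  have hker : LinearMap.ker (modelMat n t b δ).mulVecLin = sumZeroPrefix ℂ htn := by
    ext v
    rw [LinearMap.mem_ker, mulVecLin_apply, modelMat_mulVec_eq_zero_iff hδ, mem_sumZeroPrefix_iff]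
  exact ⟨modelMat_mulVec_eq_zero_iff hδ, by rw [hker, finrank_sumZeroPrefix]⟩

/-- The kernel of `M = S^{t+1} + b S^{t+2} + δ J` (with `δ ≠ 0`) equals the set of
vectors `v` with `v_j = 0` for all `j > t+1` and `Σ_{j=1}^{t+1} v_j = 0`;
in particular the geometric multiplicity of the eigenvalue `0` equals `t`. -/
theorem modelMat_ker_description (n t : ℕ) (hn : 2 ≤ n) (ht1 : 1 ≤ t) (ht2 : t ≤ n - 2)
    (b δ : ℂ) (hδ : δ ≠ 0) :
    (∀ v : Fin n → ℂ, (modelMat n t b δ).mulVec v = 0 ↔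
      ((∀ j : Fin n, t + 1 ≤ (j : ℕ) → v j = 0) ∧
        ∑ j ∈ Finset.univ.filter (fun j : Fin n => (j : ℕ) < t + 1), v j = 0)) ∧
    Module.finrank ℂ (LinearMap.ker (modelMat n t b δ).mulVecLin) = t :=
  modelMat_ker_description_general n t hn ht2 b δ hδ
end

section
/- Let n ≥ 2, 2 ≤ t+1 ≤ n−1, p₁ = ⌊(n−1)/(t+1)⌋ and p₂ = ⌊(n−1)/(t+2)⌋. If t+1 ∈ [⌈√(n−1)⌉, n−1] and t+1 ∈ {⌊(n−1)/k⌋ : k = 1,…,n−1}, then p₁ − p₂ = 1; if t+1 ∈ [⌈√(n−1)⌉, n−1] but t+1 ∉ {⌊(n−1)/k⌋ : k = 1,…,n−1}, then p₁ = p₂. -/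
/-! Write `m = n - 1` and `s = t + 1`. Since `m ≤ s² < s (s + 1)`, the quotients `⌊m/s⌋` and
`⌊m/(s+1)⌋` differ by at most one, and they differ at all exactly when some integer `k`
satisfies `k s ≤ m < k (s + 1)`, i.e. when `s = ⌊m/k⌋`. -/

namespace Nat

theorem div_le_div_succ_add_one {m s : ℕ} (h : m < s * (s + 1)) :
    m / s ≤ m / (s + 1) + 1 := by
  have hs : 0 < s := pos_of_ne_zero (by rintro rfl; simp at h)
  have hq : m / (s + 1) < s := Nat.div_lt_of_lt_mul (by rwa [Nat.mul_comm])
  have hm : m < (s + 1) * (m / (s + 1) + 1) := lt_mul_div_succ m s.succ_pos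
  exact Nat.lt_succ_iff.mp ((div_lt_iff_lt_mul hs).2 (by nlinarith))

theorem exists_div_eq_iff_div_succ_lt_div {m s : ℕ} :
    (∃ k, 1 ≤ k ∧ k ≤ m ∧ m / k = s) ↔ m / (s + 1) < m / s := by
  constructor
  · rintro ⟨k, hk, hkm, rfl⟩
    have hs : 0 < m / k := (le_div_iff_mul_le hk).2 (by omega)
    have hlo : k ≤ m / (m / k) := (le_div_iff_mul_le hs).2 (mul_div_le m k)
    have hhi : m / (m / k + 1) < k :=
      (div_lt_iff_lt_mul (succ_pos _)).2 (lt_mul_div_succ m hk)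
    omega
  · intro h
    have hk : 0 < m / s := zero_lt_of_lt h
    have hm : m < (s + 1) * (m / s) :=
      ((div_lt_iff_lt_mul (succ_pos s)).1 h).trans_eq (Nat.mul_comm _ _)
    have hlo : s ≤ m / (m / s) := (le_div_iff_mul_le hk).2 (mul_div_le m s)
    have hhi : m / (m / s) < s + 1 := (div_lt_iff_lt_mul hk).2 hm
    exact ⟨m / s, hk, div_le_self m s, by omega⟩

end Nat

theorem p1_sub_p2_general (n t : ℕ)
    (hsqrt : n - 1 ≤ (t + 1) ^ 2) :
    ((∃ k, 1 ≤ k ∧ k ≤ n - 1 ∧ (n - 1) / k = t + 1) →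
        (n - 1) / (t + 1) = (n - 1) / (t + 2) + 1) ∧
    (¬ (∃ k, 1 ≤ k ∧ k ≤ n - 1 ∧ (n - 1) / k = t + 1) →
        (n - 1) / (t + 1) = (n - 1) / (t + 2)) := by
  rw [show t + 2 = t + 1 + 1 from rfl, Nat.exists_div_eq_iff_div_succ_lt_div]
  have hle := Nat.div_le_div_succ_add_one (show n - 1 < (t + 1) * (t + 1 + 1) by nlinarith)
  have hmono : (n - 1) / (t + 1 + 1) ≤ (n - 1) / (t + 1) :=
    Nat.div_le_div_left (Nat.le_succ _) t.succ_pos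
  omega

/-- Let `p₁ = ⌊(n−1)/(t+1)⌋` and `p₂ = ⌊(n−1)/(t+2)⌋`. If
`t+1 ∈ [⌈√(n−1)⌉, n−1]` (equivalently `n−1 ≤ (t+1)²` and `t+1 ≤ n−1`), then
`p₁ − p₂ = 1` when `t+1 = ⌊(n−1)/k⌋` for some `1 ≤ k ≤ n−1`, and `p₁ = p₂` otherwise. -/
theorem p1_sub_p2 (n t : ℕ) (hn : 2 ≤ n) (ht1 : 1 ≤ t) (ht2 : t ≤ n - 2)
    (hsqrt : n - 1 ≤ (t + 1) ^ 2) (hub : t + 1 ≤ n - 1) :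
    ((∃ k, 1 ≤ k ∧ k ≤ n - 1 ∧ (n - 1) / k = t + 1) →
        (n - 1) / (t + 1) = (n - 1) / (t + 2) + 1) ∧
    (¬ (∃ k, 1 ≤ k ∧ k ≤ n - 1 ∧ (n - 1) / k = t + 1) →
        (n - 1) / (t + 1) = (n - 1) / (t + 2)) :=
  p1_sub_p2_general n t hsqrt
end

section
/- Conversely, if λ ∈ ℂ is not an eigenvalue of M ∈ ℂ^{n×n} and ‖(λI − M)^{-1}‖ > ε^{-1} for some ε > 0, then there exists E ∈ ℂ^{n×n} with ‖E‖ < ε such that λ is an eigenvalue of M + E. -/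
/-!
Put `A = λI − M`. Since `‖A⁻¹‖ > ε⁻¹`, some `x` with `‖x‖ < 1` has `‖A⁻¹ x‖ > ε⁻¹`, so `y = A⁻¹ x`
is a vector that `A` shrinks by a factor less than `ε`. The rank-one operator
`z ↦ ⟪y, z⟫ ‖y‖⁻² • A y` agrees with `A` at `y` and has norm `‖A y‖ / ‖y‖ < ε`; it is the
required `E`, because `(λI − M − E) y = 0`.
-/

open Matrix

section Normed

variable {𝕜 E F : Type*} [DenselyNormedField 𝕜] [NormedAddCommGroup E]
  [NormedSpace 𝕜 E] [SeminormedAddCommGroup F] [NormedSpace 𝕜 F]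

theorem ContinuousLinearMap.exists_norm_apply_lt_of_inv_lt_norm_rightInverse {A : F → E}
    {R : E →L[𝕜] F} (hAR : Function.RightInverse R A) {ε : ℝ} (hε : 0 < ε)
    (hR : ε⁻¹ < ‖R‖) : ∃ y, y ≠ 0 ∧ ‖A y‖ < ε * ‖y‖ := by
  obtain ⟨x, hx, hRx⟩ := R.exists_lt_apply_of_lt_opNorm hR
  have hRx_pos : 0 < ‖R x‖ := (inv_pos.2 hε).trans hRx
  refine ⟨R x, ne_zero_of_norm_ne_zero hRx_pos.ne', ?_⟩
  calc ‖A (R x)‖ = ‖x‖ := by rw [hAR x]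
    _ < 1 := hx
    _ = ε * ε⁻¹ := (mul_inv_cancel₀ hε.ne').symm
    _ < ε * ‖R x‖ := mul_lt_mul_of_pos_left hRx hε

end Normed

section InnerProduct

variable {𝕜 E F : Type*} [RCLike 𝕜] [NormedAddCommGroup E] [InnerProductSpace 𝕜 E]
  [NormedAddCommGroup F] [InnerProductSpace 𝕜 F]

open InnerProductSpace in
theorem exists_norm_eq_div_apply_eq (x : E) {y : F} (hy : y ≠ 0) :
    ∃ T : F →L[𝕜] E, ‖T‖ = ‖x‖ / ‖y‖ ∧ T y = x := by
  have hy' : (‖y‖ : 𝕜) ≠ 0 := by simpa using hy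
  refine ⟨rankOne 𝕜 (((‖y‖ : 𝕜) ^ 2)⁻¹ • x) y, ?_, ?_⟩
  · rw [norm_rankOne, norm_smul, norm_inv, norm_pow, RCLike.norm_ofReal, abs_norm]
    field_simp
  · rw [rankOne_apply, inner_self_eq_norm_sq_to_K, smul_smul, mul_inv_cancel₀ (pow_ne_zero 2 hy'),
      one_smul]

theorem ContinuousLinearMap.exists_norm_lt_apply_eq_of_inv_lt_norm_rightInverse
    {A : F → E} {R : E →L[𝕜] F} (hAR : Function.RightInverse R A) {ε : ℝ} (hε : 0 < ε)
    (hR : ε⁻¹ < ‖R‖) : ∃ T : F →L[𝕜] E, ‖T‖ < ε ∧ ∃ y, y ≠ 0 ∧ T y = A y := by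
  obtain ⟨y, hy, hAy⟩ := R.exists_norm_apply_lt_of_inv_lt_norm_rightInverse hAR hε hR
  obtain ⟨T, hT, hTy⟩ := exists_norm_eq_div_apply_eq (𝕜 := 𝕜) (A y) hy
  refine ⟨T, ?_, y, hy, hTy⟩
  rwa [hT, div_lt_iff₀ (norm_pos_iff.2 hy)]

end InnerProduct

theorem Matrix.isUnit_det_of_inv_ne_zero {n R : Type*} [Fintype n] [DecidableEq n] [CommRing R]
    {A : Matrix n n R} (h : A⁻¹ ≠ 0) : IsUnit A.det :=
  not_not.1 (mt A.nonsing_inv_apply_not_isUnit h)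

theorem pseudospectrum_resolvent_to_perturb_general (n : ℕ) (M : Matrix (Fin n) (Fin n) ℂ)
    (lam : ℂ) (ε : ℝ) (hε : 0 < ε)
    (hres : ε⁻¹ < ‖Matrix.toEuclideanCLM (𝕜 := ℂ)
        ((lam • (1 : Matrix (Fin n) (Fin n) ℂ) - M)⁻¹)‖) :
    ∃ E : Matrix (Fin n) (Fin n) ℂ,
      ‖Matrix.toEuclideanCLM (𝕜 := ℂ) E‖ < ε ∧
      ∃ v : Fin n → ℂ, v ≠ 0 ∧ (M + E).mulVec v = lam • v := by
  set A := lam • (1 : Matrix (Fin n) (Fin n) ℂ) - M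
  -- A singular `A` would have the junk inverse `A⁻¹ = 0`, contradicting `hres`.
  have hA : IsUnit A.det := isUnit_det_of_inv_ne_zero fun h => by
    rw [h, map_zero, norm_zero] at hres
    exact (inv_pos.2 hε).not_gt hres
  have hAR : Function.RightInverse (toEuclideanCLM (𝕜 := ℂ) A⁻¹) (toEuclideanCLM (𝕜 := ℂ) A) :=
    fun x => by
      rw [← mul_apply_eq_comp, ← map_mul, mul_nonsing_inv A hA, map_one, one_apply_eq_self]
  obtain ⟨T, hT, y, hy, hTy⟩ :=
    ContinuousLinearMap.exists_norm_lt_apply_eq_of_inv_lt_norm_rightInverse hAR hε hres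
  set E := (toEuclideanCLM (𝕜 := ℂ)).symm T
  have hEA : E *ᵥ WithLp.ofLp y = A *ᵥ WithLp.ofLp y := by
    rw [← ofLp_toEuclideanCLM, ← ofLp_toEuclideanCLM, StarAlgEquiv.apply_symm_apply, hTy]
  refine ⟨E, by simpa [E] using hT, WithLp.ofLp y, (WithLp.ofLp_eq_zero 2).ne.2 hy, ?_⟩
  rw [add_mulVec, hEA, sub_mulVec, smul_mulVec, one_mulVec]
  abel

/-- If `λ` is not an eigenvalue of `M` and `‖(λI − M)⁻¹‖ > ε⁻¹`, then there exists a
perturbation `E` with `‖E‖ < ε` such that `λ` is an eigenvalue of `M + E`. -/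
theorem pseudospectrum_resolvent_to_perturb (n : ℕ) (M : Matrix (Fin n) (Fin n) ℂ)
    (lam : ℂ) (ε : ℝ) (hε : 0 < ε)
    (hnev : ¬ ∃ v : Fin n → ℂ, v ≠ 0 ∧ M.mulVec v = lam • v)
    (hres : ε⁻¹ < ‖Matrix.toEuclideanCLM (𝕜 := ℂ)
        ((lam • (1 : Matrix (Fin n) (Fin n) ℂ) - M)⁻¹)‖) :
    ∃ E : Matrix (Fin n) (Fin n) ℂ,
      ‖Matrix.toEuclideanCLM (𝕜 := ℂ) E‖ < ε ∧
      ∃ v : Fin n → ℂ, v ≠ 0 ∧ (M + E).mulVec v = lam • v :=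
  pseudospectrum_resolvent_to_perturb_general n M lam ε hε hres
end
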